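/- Let A be a skew left brace such that A/Ann(A) is finite. Then A⁽²⁾ and the additive commutator subgroup [A,A]₊ are both finite. Conversely, if (A,+) is finitely generated and both A⁽²⁾ and [A,A]₊ are finite, then A/Ann(A) is finite. -/

import Mathlib

/-- A skew left brace: `(A,+)` and `(A,∘)` (written `*`) are groups with
`a ∘ (b + c) = a ∘ b - a + a ∘ c`. -/
class SkewBrace (A : Type*) extends AddGroup A, Group A where
  compat : ∀ a b c : A, a * (b + c) = a * b + (-a + a * c)

namespace SkewBrace

variable {A : Type*}

/-- `λ_a (b) = -a + a ∘ b`. -/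
def lam [SkewBrace A] (a b : A) : A := -a + a * b

/-- `a * b = λ_a(b) - b = -a + a∘b - b` (the brace star operation). -/
def star [SkewBrace A] (a b : A) : A := -a + a * b - b

/-- An ideal of a skew left brace: a subgroup of `(A,+)`, normal in `(A,+)` and
`(A,∘)`, and invariant under all `λ_a`. -/
structure Ideal (A : Type*) [SkewBrace A] where
  carrier : Set A
  zero_mem : (0 : A) ∈ carrier
  add_mem : ∀ ⦃a b : A⦄, a ∈ carrier → b ∈ carrier → a + b ∈ carrier
  neg_mem : ∀ ⦃a : A⦄, a ∈ carrier → -a ∈ carrier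
  add_conj_mem : ∀ (a : A) ⦃b : A⦄, b ∈ carrier → a + b + -a ∈ carrier
  mul_conj_mem : ∀ (a : A) ⦃b : A⦄, b ∈ carrier → a * b * a⁻¹ ∈ carrier
  lam_mem : ∀ (a : A) ⦃b : A⦄, b ∈ carrier → lam a b ∈ carrier

/-- The ideal generated by a set, as a set. -/
def genIdeal [SkewBrace A] (S : Set A) : Set A :=
  {x | ∀ I : Ideal A, S ⊆ I.carrier → x ∈ I.carrier}

/-- A maximal ideal: a proper ideal such that the only ideals containing it are
itself and the whole brace. -/
def Ideal.IsMaximal [SkewBrace A] (M : Ideal A) : Prop :=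
  M.carrier ≠ Set.univ ∧
    ∀ J : Ideal A, M.carrier ⊆ J.carrier → J.carrier = M.carrier ∨ J.carrier = Set.univ

/-- The radical: the intersection of all maximal ideals (the whole brace if there
are none). -/
def radical (A : Type*) [SkewBrace A] : Set A :=
  {x | ∀ M : Ideal A, M.IsMaximal → x ∈ M.carrier}

/-- The set of all elements `a * b` (star). -/
def starSet (A : Type*) [SkewBrace A] : Set A := {x | ∃ a b : A, star a b = x}

/-- `A⁽²⁾` as the ideal generated by all `a * b`. -/
def sq (A : Type*) [SkewBrace A] : Set A := genIdeal (starSet A)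

/-- `A⁽²⁾` as the additive subgroup generated by all `a * b`. -/
def sqAdd (A : Type*) [SkewBrace A] : Set A := (AddSubgroup.closure (starSet A) : Set A)

open scoped Classical in
/-- The weight of a skew left brace: the minimal number of elements generating it
as an ideal (with `ω(0) = 1` by convention). -/
noncomputable def weight (A : Type*) [SkewBrace A] : ℕ∞ :=
  if Subsingleton A then 1
  else ⨅ (S : Finset A) (_ : genIdeal (S : Set A) = Set.univ), (S.card : ℕ∞)

/-- Artinian: every descending chain of ideals is eventually stationary. -/
def IsArtinian (A : Type*) [SkewBrace A] : Prop :=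
  ∀ f : ℕ → Ideal A, (∀ n, (f (n + 1)).carrier ⊆ (f n).carrier) →
    ∃ N, ∀ n, N ≤ n → (f n).carrier = (f N).carrier

/-- A homomorphism of skew left braces. -/
structure BraceHom (A B : Type*) [SkewBrace A] [SkewBrace B] where
  toFun : A → B
  map_add' : ∀ x y, toFun (x + y) = toFun x + toFun y
  map_mul' : ∀ x y, toFun (x * y) = toFun x * toFun y

/-- The kernel of a brace homomorphism. -/
def BraceHom.ker {A B : Type*} [SkewBrace A] [SkewBrace B] (f : BraceHom A B) : Set A :=
  {a | f.toFun a = 0}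

/-- The socle `Soc(A) = Ker λ ∩ Z(A,+)`. -/
def Soc (A : Type*) [SkewBrace A] : Set A :=
  {a | (∀ b : A, lam a b = b) ∧ ∀ b : A, a + b = b + a}

/-- The annihilator `Ann(A) = Soc(A) ∩ Z(A,∘)`. -/
def ann (A : Type*) [SkewBrace A] : Set A :=
  {a | (∀ b : A, lam a b = b) ∧ (∀ b : A, a + b = b + a) ∧ (∀ b : A, a * b = b * a)}

section Aux
variable {A : Type*} [SkewBrace A]

theorem mul_zero' (a : A) : a * 0 = a := by
  have h := compat a 0 0
  rw [add_zero] at h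
  have h2 : -a + a * 0 = 0 := (left_eq_add.mp h).symm ▸ rfl
  have := congrArg (a + ·) h2
  simpa [← add_assoc] using this

theorem one_eq_zero : (1 : A) = 0 := by
  have := mul_zero' (1 : A)
  rw [one_mul] at this; exact this.symm

theorem mul_eq_add_lam (a b : A) : a * b = a + lam a b := by
  simp [lam, ← add_assoc]

theorem lam_add (a b c : A) : lam a (b + c) = lam a b + lam a c := by
  simp only [lam, compat a b c, ← add_assoc]

theorem lam_zero (a : A) : lam a 0 = 0 := by simp [lam, mul_zero']

theorem lam_neg (a b : A) : lam a (-b) = -lam a b := by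
  have h : lam a b + lam a (-b) = 0 := by rw [← lam_add, add_neg_cancel, lam_zero]
  exact (neg_eq_of_add_eq_zero_right h).symm

theorem lam_mul (a b c : A) : lam (a * b) c = lam a (lam b c) := by
  have : lam a (lam b c) = lam a (-b) + lam a (b * c) := by
    rw [← lam_add]
    rfl
  rw [this, lam_neg]
  simp [lam, mul_assoc, ← add_assoc]

theorem lam_one (b : A) : lam 1 b = b := by
  simp [lam, one_eq_zero]

theorem lam_lam_inv (a b : A) : lam a (lam a⁻¹ b) = b := by
  rw [← lam_mul, mul_inv_cancel, lam_one]

theorem lam_inv_lam (a b : A) : lam a⁻¹ (lam a b) = b := by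
  rw [← lam_mul, inv_mul_cancel, lam_one]

theorem lam_injective (a : A) : Function.Injective (lam a) := by
  intro x y h
  have := congrArg (lam a⁻¹) h
  rwa [lam_inv_lam, lam_inv_lam] at this

theorem star_eq (a b : A) : star a b = lam a b - b := by
  simp [star, lam, sub_eq_add_neg, add_assoc]

theorem lam_eq_star_add (a b : A) : lam a b = star a b + b := by
  rw [star_eq]; simp

theorem ann_lam {z : A} (hz : z ∈ ann A) (a : A) : lam a z = z := by
  obtain ⟨h1, h2, h3⟩ := hz
  calc lam a z = -a + a * z := rfl
    _ = -a + z * a := by rw [h3 a]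
    _ = -a + (z + lam z a) := by rw [mul_eq_add_lam]
    _ = -a + (z + a) := by rw [h1 a]
    _ = -a + (a + z) := by rw [h2 a]
    _ = z := by rw [← add_assoc, neg_add_cancel, zero_add]

theorem mul_ann {z : A} (hz : z ∈ ann A) (a : A) : a * z = a + z := by
  rw [mul_eq_add_lam, ann_lam hz]

theorem ann_neg_inv {z : A} (hz : z ∈ ann A) : (-z : A) = z⁻¹ := by
  have : z * (-z) = 1 := by
    rw [mul_eq_add_lam, hz.1 (-z), add_neg_cancel, one_eq_zero]
  exact eq_inv_of_mul_eq_one_right this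

theorem neg_mem_ann {z : A} (hz : z ∈ ann A) : (-z : A) ∈ ann A := by
  obtain ⟨h1, h2, h3⟩ := hz
  refine ⟨?_, ?_, ?_⟩
  · intro b
    have : lam (-z) (lam z b) = lam ((-z) * z) b := (lam_mul _ _ _).symm
    rw [h1 b] at this
    rw [this, ann_neg_inv ⟨h1, h2, h3⟩, inv_mul_cancel, lam_one]
  · intro b
    have key : -z + b + z = b := by
      rw [add_assoc, ← h2 b, ← add_assoc, neg_add_cancel, zero_add]
    calc -z + b = -z + b + (z + -z) := by rw [add_neg_cancel, add_zero]
      _ = b + -z := by rw [← add_assoc, key]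
  · intro b
    rw [ann_neg_inv ⟨h1, h2, h3⟩]
    rw [inv_mul_eq_iff_eq_mul, ← mul_assoc, h3 b, mul_assoc, mul_inv_cancel, mul_one]

end Aux

/-- A simple skew left brace: it has exactly two ideals, `0` and itself. -/
def IsSimple (A : Type*) [SkewBrace A] : Prop :=
  (∃ x y : A, x ≠ y) ∧ ∀ I : Ideal A, I.carrier = {(0 : A)} ∨ I.carrier = Set.univ

/-- A prime ideal `P`: the quotient `A/P` is a prime brace; internally, for all
ideals `I, J ⊇ P` with `I * J ⊆ P`, one of `I, J` equals `P`. -/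
def Ideal.IsPrime [SkewBrace A] (P : Ideal A) : Prop :=
  ∀ I J : Ideal A, P.carrier ⊆ I.carrier → P.carrier ⊆ J.carrier →
    (∀ i ∈ I.carrier, ∀ j ∈ J.carrier, star i j ∈ P.carrier) →
    I.carrier ⊆ P.carrier ∨ J.carrier ⊆ P.carrier

end SkewBrace

namespace SkewBrace

/-- The commutator subgroup `[A,A]₊` of `(A,+)`, as a set. -/
def addCommutatorSet (A : Type*) [SkewBrace A] : Set A :=
  (AddSubgroup.closure {x : A | ∃ a b : A, a + b - a - b = x} : AddSubgroup A)

/-- `A/Ann(A)` is finite, phrased via finitely many cosets of `Ann(A)`. -/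
def FiniteModAnn (A : Type*) [SkewBrace A] : Prop :=
  ∃ F : Finset A, ∀ a : A, ∃ b ∈ F, -b + a ∈ ann A

section Part1

/-- Semidirect product `(A,+) ⋊_λ (A,∘)`. -/
@[ext]
structure SDP (A : Type*) [SkewBrace A] where
  l : A
  r : A

namespace SDP

variable {A : Type*} [SkewBrace A]

instance : Mul (SDP A) := ⟨fun g h => ⟨g.l + lam g.r h.l, g.r * h.r⟩⟩
instance : One (SDP A) := ⟨⟨0, 1⟩⟩
instance : Inv (SDP A) := ⟨fun g => ⟨lam g.r⁻¹ (-g.l), g.r⁻¹⟩⟩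

@[simp] theorem mul_l (g h : SDP A) : (g * h).l = g.l + lam g.r h.l := rfl
@[simp] theorem mul_r (g h : SDP A) : (g * h).r = g.r * h.r := rfl
@[simp] theorem one_l : (1 : SDP A).l = 0 := rfl
@[simp] theorem one_r : (1 : SDP A).r = 1 := rfl
@[simp] theorem inv_l (g : SDP A) : (g⁻¹).l = lam g.r⁻¹ (-g.l) := rfl
@[simp] theorem inv_r (g : SDP A) : (g⁻¹).r = g.r⁻¹ := rfl

instance : Group (SDP A) where
  mul_assoc a b c := by
    ext
    · simp [lam_add, lam_mul, add_assoc]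
    · simp [mul_assoc]
  one_mul a := by ext <;> simp [lam_one]
  mul_one a := by ext <;> simp [lam_zero]
  inv_mul_cancel a := by
    ext
    · simp [← lam_add, lam_zero]
    · simp

theorem mem_center_of_ann_one {x : A} (hx : x ∈ ann A) :
    (⟨x, 1⟩ : SDP A) ∈ Subgroup.center (SDP A) := by
  rw [Subgroup.mem_center_iff]
  intro g
  ext
  · simp [ann_lam hx, lam_one, hx.2.1 g.l]
  · simp

theorem mem_center_diag {z : A} (hz : z ∈ ann A) :
    (⟨-z, z⟩ : SDP A) ∈ Subgroup.center (SDP A) := by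
  have hz' := neg_mem_ann hz
  rw [Subgroup.mem_center_iff]
  intro g
  ext
  · simp [ann_lam hz', hz.1 g.l, hz'.2.1 g.l]
  · simp [hz.2.2 g.r]

/-- Every element of `SDP A` is, modulo the center, of the form `⟨f', f⟩` with
`f, f' ∈ F`. -/
theorem exists_center_rep {F : Finset A} (hF : ∀ a : A, ∃ b ∈ F, -b + a ∈ ann A)
    (g : SDP A) : ∃ f ∈ F, ∃ f' ∈ F, ∃ k ∈ Subgroup.center (SDP A),
      g * k = (⟨f', f⟩ : SDP A) := by
  obtain ⟨f, hf, hz⟩ := hF g.r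
  set z' : A := -f + g.r with hz'def
  have hb : g.r = f + z' := by rw [hz'def, add_neg_cancel_left]
  have h1 : g * (⟨-(-z'), -z'⟩ : SDP A) = ⟨g.l + z', f⟩ := by
    ext
    · simp [neg_neg, ann_lam hz]
    · simp only [mul_r]
      rw [mul_ann (neg_mem_ann hz), hb, add_assoc, add_neg_cancel, add_zero]
  obtain ⟨f', hf', hx⟩ := hF (g.l + z')
  set x' : A := -f' + (g.l + z') with hx'def
  have ha : g.l + z' = f' + x' := by rw [hx'def, add_neg_cancel_left]
  have h2 : (⟨g.l + z', f⟩ : SDP A) * (⟨-x', 1⟩ : SDP A) = ⟨f', f⟩ := by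
    ext
    · simp only [mul_l]
      rw [ann_lam (neg_mem_ann hx), ha, add_assoc, add_neg_cancel, add_zero]
    · simp
  refine ⟨f, hf, f', hf', (⟨-(-z'), -z'⟩ : SDP A) * (⟨-x', 1⟩ : SDP A),
    Subgroup.mul_mem _ (mem_center_diag (neg_mem_ann hz))
      (mem_center_of_ann_one (neg_mem_ann hx)), ?_⟩
  rw [← mul_assoc, h1, h2]

end SDP

open scoped commutatorElement

variable {A : Type*} [SkewBrace A]

theorem commutatorElement_mul_center_left {G : Type*} [Group G] {k : G}
    (hk : k ∈ Subgroup.center G) (g h : G) : ⁅g * k, h⁆ = ⁅g, h⁆ := by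
  have hc : ∀ x : G, x * k = k * x := Subgroup.mem_center_iff.mp hk
  have hswap : ∀ x y : G, k * (x * y) = x * (k * y) := fun x y => by
    rw [← mul_assoc, ← hc x, mul_assoc]
  simp only [commutatorElement_def, mul_inv_rev, mul_assoc]
  rw [hswap, mul_inv_cancel_left]

theorem commutatorElement_mul_center_right {G : Type*} [Group G] {k : G}
    (hk : k ∈ Subgroup.center G) (g h : G) : ⁅g, h * k⁆ = ⁅g, h⁆ := by
  have hc : ∀ x : G, x * k = k * x := Subgroup.mem_center_iff.mp hk
  have hswap : ∀ x y : G, k * (x * y) = x * (k * y) := fun x y => by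
    rw [← mul_assoc, ← hc x, mul_assoc]
  simp only [commutatorElement_def, mul_inv_rev, mul_assoc]
  rw [hswap, mul_inv_cancel_left]

theorem part1 (h : FiniteModAnn A) :
    (sqAdd A).Finite ∧ (addCommutatorSet A).Finite := by
  classical
  obtain ⟨F, hF⟩ := h
  -- the commutator set of `SDP A` is finite
  have hcs : (commutatorSet (SDP A)).Finite := by
    have : commutatorSet (SDP A) ⊆
        (fun p : (A × A) × A × A =>
          ⁅(⟨p.1.1, p.1.2⟩ : SDP A), (⟨p.2.1, p.2.2⟩ : SDP A)⁆) ''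
          (((F ×ˢ F) ×ˢ F ×ˢ F : Finset ((A × A) × A × A)) : Set ((A × A) × A × A)) := by
      rintro x ⟨g, g', rfl⟩
      obtain ⟨f, hf, f', hf', k, hk, hgk⟩ := SDP.exists_center_rep hF g
      obtain ⟨e, he, e', he', k', hk', hgk'⟩ := SDP.exists_center_rep hF g'
      have hg : g = (⟨f', f⟩ : SDP A) * k⁻¹ := by
        rw [← hgk, mul_assoc, mul_inv_cancel, mul_one]
      have hg' : g' = (⟨e', e⟩ : SDP A) * k'⁻¹ := by
        rw [← hgk', mul_assoc, mul_inv_cancel, mul_one]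
      refine ⟨((f', f), (e', e)), by simp [hf, hf', he, he'], ?_⟩
      rw [hg, hg', commutatorElement_mul_center_left (Subgroup.inv_mem _ hk),
        commutatorElement_mul_center_right (Subgroup.inv_mem _ hk')]
    exact Set.Finite.subset (Set.Finite.image _ (Finset.finite_toSet _)) this
  haveI : Finite (commutatorSet (SDP A)) := hcs.to_subtype
  have hKfin : ((commutator (SDP A) : Subgroup (SDP A)) : Set (SDP A)).Finite :=
    Set.finite_coe_iff.mp (inferInstanceAs (Finite (commutator (SDP A))))
  -- the subgroup of `A` mapping into the commutator subgroup
  have hι : ∀ x y : A, (⟨x, 1⟩ : SDP A) * (⟨y, 1⟩ : SDP A) = ⟨x + y, 1⟩ := by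
    intro x y; ext <;> simp [lam_one]
  have hιinv : ∀ x : A, (⟨x, 1⟩ : SDP A)⁻¹ = ⟨-x, 1⟩ := by
    intro x; ext <;> simp [lam_one]
  set P : AddSubgroup A :=
    { carrier := {x : A | (⟨x, 1⟩ : SDP A) ∈ commutator (SDP A)}
      zero_mem' := by
        show (⟨0, 1⟩ : SDP A) ∈ commutator (SDP A)
        exact Subgroup.one_mem _
      add_mem' := by
        intro x y hx hy
        show (⟨x + y, 1⟩ : SDP A) ∈ commutator (SDP A)
        rw [← hι]
        exact Subgroup.mul_mem _ hx hy
      neg_mem' := by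
        intro x hx
        show (⟨-x, 1⟩ : SDP A) ∈ commutator (SDP A)
        rw [← hιinv]
        exact Subgroup.inv_mem _ hx } with hPdef
  have hPfin : (P : Set A).Finite := by
    have : (P : Set A) = (fun x : A => (⟨x, 1⟩ : SDP A)) ⁻¹'
        ((commutator (SDP A) : Subgroup (SDP A)) : Set (SDP A)) := rfl
    rw [this]
    exact Set.Finite.preimage (fun x _ y _ hxy => congrArg SDP.l hxy) hKfin
  have hstar : ∀ a b : A, star a b ∈ P := by
    intro a b
    show (⟨star a b, 1⟩ : SDP A) ∈ commutator (SDP A)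
    have : (⟨star a b, 1⟩ : SDP A) = ⁅(⟨0, a⟩ : SDP A), (⟨b, 1⟩ : SDP A)⁆ := by
      rw [commutatorElement_def]
      ext
      · simp [lam_zero, lam_one, star_eq, sub_eq_add_neg]
      · simp
    rw [this]
    exact Subgroup.commutator_mem_commutator (Subgroup.mem_top _) (Subgroup.mem_top _)
  have hcomm : ∀ a b : A, a + b - a - b ∈ P := by
    intro a b
    show (⟨a + b - a - b, 1⟩ : SDP A) ∈ commutator (SDP A)
    have : (⟨a + b - a - b, 1⟩ : SDP A) = ⁅(⟨a, 1⟩ : SDP A), (⟨b, 1⟩ : SDP A)⁆ := by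
      rw [commutatorElement_def]
      ext
      · simp [lam_one, sub_eq_add_neg, add_assoc]
      · simp
    rw [this]
    exact Subgroup.commutator_mem_commutator (Subgroup.mem_top _) (Subgroup.mem_top _)
  constructor
  · refine hPfin.subset ?_
    have : AddSubgroup.closure (starSet A) ≤ P := by
      rw [AddSubgroup.closure_le]
      rintro x ⟨a, b, rfl⟩
      exact hstar a b
    exact fun x hx => this hx
  · refine hPfin.subset ?_
    have : AddSubgroup.closure {x : A | ∃ a b : A, a + b - a - b = x} ≤ P := by
      rw [AddSubgroup.closure_le]
      rintro x ⟨a, b, rfl⟩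
      exact hcomm a b
    exact fun x hx => this hx

end Part1

section Part2

open scoped Pointwise

variable {A : Type*} [SkewBrace A]

theorem conj_mem_of_commGens {N' : AddSubgroup A}
    (h : ∀ a b : A, a + b - a - b ∈ N') {n : A} (hn : n ∈ N') (x : A) :
    x + n + -x ∈ N' := by
  have key : x + n + -x = n + (-n + x + n - x) := by
    simp [sub_eq_add_neg, add_assoc]
  rw [key]
  refine add_mem hn ?_
  have := h (-n) x
  simpa [sub_eq_add_neg, add_assoc] using this

theorem part2 (hFG : AddGroup.FG A) (h2 : (sqAdd A).Finite)
    (hc : (addCommutatorSet A).Finite) : FiniteModAnn A := by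
  classical
  obtain ⟨S, hS⟩ := hFG.out
  set commGens : Set A := {x : A | ∃ a b : A, a + b - a - b = x} with hcommGens
  set N : AddSubgroup A := AddSubgroup.closure (starSet A ∪ commGens) with hNdef
  have hKc : ∀ a b : A, a + b - a - b ∈ AddSubgroup.closure commGens :=
    fun a b => AddSubgroup.subset_closure ⟨a, b, rfl⟩
  haveI : (AddSubgroup.closure commGens).Normal :=
    ⟨fun n hn g => conj_mem_of_commGens hKc hn g⟩
  -- `N` is finite
  have hNfin : (N : Set A).Finite := by
    have : (N : Set A) = (sqAdd A) + (addCommutatorSet A) := by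
      rw [hNdef, AddSubgroup.closure_union]
      exact AddSubgroup.add_normal _ _
    rw [this]
    exact h2.add hc
  -- membership facts for `N`
  have hN_star : ∀ a b : A, star a b ∈ N :=
    fun a b => AddSubgroup.subset_closure (Or.inl ⟨a, b, rfl⟩)
  have hN_comm : ∀ a b : A, a + b - a - b ∈ N :=
    fun a b => AddSubgroup.subset_closure (Or.inr ⟨a, b, rfl⟩)
  have hN_conj : ∀ (x : A) {n : A}, n ∈ N → x + n + -x ∈ N := by
    intro x n hn
    exact conj_mem_of_commGens hN_comm hn x
  have hN_lam : ∀ (a : A) {n : A}, n ∈ N → lam a n ∈ N := by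
    intro a n hn
    rw [lam_eq_star_add]
    exact add_mem (hN_star a n) hn
  haveI : Finite (N : Set A) := hNfin.to_subtype
  have hN_lam_surj : ∀ (a : A) {n : A}, n ∈ N → ∃ m ∈ N, lam a m = n := by
    intro a n hn
    have hinj : Function.Injective (fun m : (N : Set A) =>
        (⟨lam a m, hN_lam a m.2⟩ : (N : Set A))) := by
      intro m m' hmm'
      exact Subtype.ext (lam_injective a (congrArg Subtype.val hmm'))
    have hsurj := Finite.injective_iff_surjective.mp hinj
    obtain ⟨m, hm⟩ := hsurj ⟨n, hn⟩
    exact ⟨m, m.2, congrArg Subtype.val hm⟩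
  -- displacement lemmas
  have d1 : ∀ a b : A, -b + lam a b ∈ N := by
    intro a b
    have : -b + lam a b = -b + star a b + -(-b) := by
      rw [lam_eq_star_add]
      simp [add_assoc]
    rw [this]
    exact hN_conj (-b) (hN_star a b)
  have dcomm : ∀ a b : A, -(a + b) + (b + a) ∈ N := by
    intro a b
    have := hN_comm (-b) (-a)
    simpa [sub_eq_add_neg, add_assoc, neg_add_rev] using this
  -- `A` is generated as a `∘`-group by `S ∪ N`
  set M : Subgroup A := Subgroup.closure ((S : Set A) ∪ (N : Set A)) with hMdef
  have hM : ∀ x : A, x ∈ M := by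
    have main : ∀ x, x ∈ AddSubgroup.closure (S : Set A) → ∀ n ∈ N, x + n ∈ M := by
      intro x hx
      refine AddSubgroup.closure_induction
        (p := fun x _ => ∀ n ∈ N, x + n ∈ M) ?_ ?_ ?_ ?_ hx
      · -- generators
        intro t ht n hn
        obtain ⟨m, hm, hlam⟩ := hN_lam_surj t hn
        have : t + n = t * m := by rw [mul_eq_add_lam, hlam]
        rw [this]
        exact mul_mem (Subgroup.subset_closure (Or.inl ht))
          (Subgroup.subset_closure (Or.inr hm))
      · -- zero
        intro n hn
        have hnM : n ∈ M := Subgroup.subset_closure (Or.inr hn)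
        rw [zero_add]
        exact hnM
      · -- add
        intro x y hx hy ihx ihy n hn
        have hd : -y + lam x y ∈ N := d1 x y
        obtain ⟨e, he, hlame⟩ := hN_lam_surj x (add_mem (neg_mem hd) hn)
        have hxye : x * (y + e) = x + y + n := by
          rw [mul_eq_add_lam, lam_add, hlame]
          have : lam x y + (-(-y + lam x y) + n) = y + n := by
            simp [neg_add_rev, add_assoc]
          rw [this, ← add_assoc]
        rw [← hxye]
        exact mul_mem (by simpa using ihx 0 (zero_mem N)) (ihy e he)
      · -- neg
        intro x hx ih n hn
        have hinv : ∀ u : A, u⁻¹ = -(-u + lam u⁻¹ u) + -u := by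
          intro u
          have h0 : lam u u⁻¹ = -u := by
            have huu : u + lam u u⁻¹ = (0 : A) := by
              rw [← mul_eq_add_lam, mul_inv_cancel, one_eq_zero]
            exact eq_neg_of_add_eq_zero_right huu
          have h1 : u⁻¹ = lam u⁻¹ (-u) := by rw [← h0, lam_inv_lam]
          conv_lhs => rw [h1]
          rw [lam_neg]
          simp [neg_add_rev, add_assoc]
        have hd : -(-x + n) + lam (-x + n)⁻¹ (-x + n) ∈ N := d1 (-x + n)⁻¹ (-x + n)
        set d' : A := -(-x + n) + lam (-x + n)⁻¹ (-x + n) with hd'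
        have hn' : -x + (-d' + -n + x) ∈ N := by
          have := hN_conj (-x) (add_mem (neg_mem hd) (neg_mem hn))
          simpa [add_assoc] using this
        have huinv : (-x + n)⁻¹ = x + (-x + (-d' + -n + x)) := by
          rw [hinv (-x + n), ← hd']
          simp [neg_add_rev, add_assoc]
        have hm : (-x + n)⁻¹ ∈ M := by
          rw [huinv]
          exact ih _ hn'
        simpa using (inv_mem hm : ((-x + n)⁻¹)⁻¹ ∈ M)
    intro x
    have hx : x ∈ AddSubgroup.closure (S : Set A) := by rw [hS]; trivial
    simpa using main x hx 0 (zero_mem N)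
  -- the finite index type
  set T : Finset A := S ∪ hNfin.toFinset with hTdef
  have hST : ∀ t ∈ S, t ∈ T := fun t ht => Finset.mem_union_left _ ht
  have hNT : ∀ n ∈ N, n ∈ T := fun n hn =>
    Finset.mem_union_right _ (hNfin.mem_toFinset.mpr hn)
  -- the master map with finite range
  set Φ : A → ({t : A // t ∈ T} → A) × ({t : A // t ∈ T} → A) × ({t : A // t ∈ T} → A) :=
    fun a => (fun t => a + t.1 + -a, fun t => lam a t.1, fun t => -a + lam t.1 a) with hΦdef
  have hΦfin : (Set.range Φ).Finite := by
    have f1 : {f : {t : A // t ∈ T} → A |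
        ∀ t, f t ∈ (fun n => t.1 + n) '' (N : Set A)}.Finite :=
      Set.Finite.pi' (fun t => hNfin.image _)
    have f3 : {f : {t : A // t ∈ T} → A | ∀ t, f t ∈ (N : Set A)}.Finite :=
      Set.Finite.pi' (fun t => hNfin)
    refine Set.Finite.subset (f1.prod (f1.prod f3)) ?_
    rintro p ⟨a, rfl⟩
    refine ⟨?_, ?_, ?_⟩
    · intro t
      refine ⟨-t.1 + (a + t.1 + -a), ?_, by simp [hΦdef, add_assoc]⟩
      have := hN_comm (-t.1) a
      simpa [sub_eq_add_neg, add_assoc] using this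
    · intro t
      exact ⟨-t.1 + lam a t.1, d1 a t.1, by simp [hΦdef, add_assoc]⟩
    · intro t
      show -a + lam t.1 a ∈ N
      have : -a + lam t.1 a = -a + star t.1 a + -(-a) := by
        rw [lam_eq_star_add]
        simp [add_assoc]
      rw [this]
      exact hN_conj (-a) (hN_star t.1 a)
  -- the key step: equal `Φ`-values give `ann`-equivalence
  have hkey : ∀ a b : A, Φ b = Φ a → -b + a ∈ ann A := by
    intro a b hba
    set z : A := -b + a with hz
    have hab : a = b + z := by rw [hz, add_neg_cancel_left]
    have e1 : ∀ t ∈ T, b + t + -b = a + t + -a := fun t ht =>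
      congrFun (congrArg Prod.fst hba) (⟨t, ht⟩ : {t : A // t ∈ T})
    have e2 : ∀ t ∈ T, lam b t = lam a t := fun t ht =>
      congrFun (congrArg (fun p => p.2.1) hba) (⟨t, ht⟩ : {t : A // t ∈ T})
    have e3 : ∀ t ∈ T, -b + lam t b = -a + lam t a := fun t ht =>
      congrFun (congrArg (fun p => p.2.2) hba) (⟨t, ht⟩ : {t : A // t ∈ T})
    -- Step A : `z` is additively central
    have hzc : ∀ c : A, z + c = c + z := by
      have hcen : ∀ t ∈ S, z + t = t + z := by
        intro t ht
        have h1 := e1 t (hST t ht)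
        have : z + t + -z = t := by
          rw [hz]
          calc -b + a + t + -(-b + a) = -b + (a + t + -a) + b := by
                simp [neg_add_rev, add_assoc]
            _ = -b + (b + t + -b) + b := by rw [← h1]
            _ = t := by simp [add_assoc]
        calc z + t = z + t + -z + z := by simp [add_assoc]
          _ = t + z := by rw [this]
      intro c
      have hsub : AddSubgroup.closure (S : Set A) ≤ AddSubgroup.centralizer {z} := by
        rw [AddSubgroup.closure_le]
        intro t ht
        rw [SetLike.mem_coe, AddSubgroup.mem_centralizer_iff]
        intro m hm
        rw [Set.mem_singleton_iff] at hm
        rw [hm]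
        exact hcen t ht
      have : c ∈ AddSubgroup.centralizer {z} := by
        rw [hS] at hsub
        exact hsub trivial
      exact (AddSubgroup.mem_centralizer_iff.mp this z rfl)
    -- Step B : `z` is fixed by all `lam`
    have hzf : ∀ c : A, lam c z = z := by
      have hfixT : ∀ t ∈ T, lam (t : A) z = z := by
        intro t ht
        have h3 := e3 t ht
        set d : A := -b + lam t b with hd
        have hlb : lam t b = b + d := by rw [hd, add_neg_cancel_left]
        have h3' : -b + lam t b = -a + lam t a := hd.symm.trans h3
        have hla : lam t a = a + d := by
          rw [hd, h3', add_neg_cancel_left]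
        calc lam t z = -(lam t b) + lam t a := by rw [hz, lam_add, lam_neg]
          _ = -(b + d) + (a + d) := by rw [hlb, hla]
          _ = -d + (z + d) := by rw [hz]; simp [neg_add_rev, add_assoc]
          _ = -d + (d + z) := by rw [hzc d]
          _ = z := by rw [← add_assoc, neg_add_cancel, zero_add]
      set Mc : Subgroup A :=
        { carrier := {c : A | lam c z = z}
          one_mem' := lam_one z
          mul_mem' := by
            intro c c' hcz hcz'
            show lam (c * c') z = z
            rw [lam_mul, hcz', hcz]
          inv_mem' := by
            intro c hcz
            show lam c⁻¹ z = z
            conv_lhs => rw [← (hcz : lam c z = z)]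
            rw [lam_inv_lam] } with hMc
      have hMle : M ≤ Mc := by
        rw [hMdef, Subgroup.closure_le]
        rintro t (ht | ht)
        · exact hfixT t (hST t ht)
        · exact hfixT t (hNT t ht)
      exact fun c => hMle (hM c)
    -- Step C : `lam z = id`
    have hzl : ∀ c : A, lam z c = c := by
      have hfixS : ∀ t ∈ S, lam z t = t := by
        intro t ht
        have hbz : b * z = a := by
          rw [mul_eq_add_lam, hzf b, ← hab]
        have : lam b t = lam b (lam z t) := by
          rw [← lam_mul, hbz]
          exact e2 t (hST t ht)
        exact (lam_injective b this.symm)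
      intro c
      set Mz : AddSubgroup A :=
        { carrier := {c : A | lam z c = c}
          zero_mem' := lam_zero z
          add_mem' := by
            intro x y hx hy
            show lam z (x + y) = x + y
            rw [lam_add, (hx : lam z x = x), (hy : lam z y = y)]
          neg_mem' := by
            intro x hx
            show lam z (-x) = -x
            rw [lam_neg, (hx : lam z x = x)] } with hMz
      have hle : AddSubgroup.closure (S : Set A) ≤ Mz := by
        rw [AddSubgroup.closure_le]
        intro t ht
        exact hfixS t ht
      rw [hS] at hle
      exact hle trivial
    -- conclusion
    exact ⟨hzl, hzc, fun c => by
      rw [mul_eq_add_lam, mul_eq_add_lam, hzl c, hzf c, hzc c]⟩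
  -- assemble the finite set of coset representatives
  refine ⟨hΦfin.toFinset.image (Function.invFun Φ), ?_⟩
  intro a
  refine ⟨Function.invFun Φ (Φ a), ?_, ?_⟩
  · exact Finset.mem_image.mpr ⟨Φ a, hΦfin.mem_toFinset.mpr ⟨a, rfl⟩, rfl⟩
  · exact hkey a _ (Function.invFun_eq ⟨a, rfl⟩)

end Part2

/-- Schur analog: if `A/Ann(A)` is finite then `A⁽²⁾` and
`[A,A]₊` are finite; conversely, if `(A,+)` is finitely generated and `A⁽²⁾`
and `[A,A]₊` are finite, then `A/Ann(A)` is finite. -/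
theorem schur_brace (A : Type*) [SkewBrace A] :
    (FiniteModAnn A → (sqAdd A).Finite ∧ (addCommutatorSet A).Finite) ∧
    (AddGroup.FG A → (sqAdd A).Finite → (addCommutatorSet A).Finite →
      FiniteModAnn A) :=
  ⟨part1, part2⟩

end SkewBrace
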